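/- Suppose x, u, o, z, z_next, a, w are finite random variables with x ⊥ (w, o) | (a, z, u) (decoupled-POMDP independence). Then the matrix identity P(W, z_next, o | a, z, U)·P(U | a, z, X) = P(W, z_next, o | a, z, X) holds, where all matrices are of conditional probabilities given fixed (a, z): (P(W, z_next, o | a, z, U))_{ij} = P(w_i, z_next, o | a, z, u_j), and similarly for the others. If moreover P(U | a, z, X) restricted to a column index set J with |J| = |U| is invertible, then P(W, z_next, o | a, z, U) = P_J(W, z_next, o | a, z, X)·P_J(U | a, z, X)^{-1}. -/

import Mathlib

open Finset Matrix
open scoped Classical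

noncomputable def Pr {Ω : Type*} [Fintype Ω] (μ : Ω → ℝ) (E : Ω → Prop) : ℝ :=
  ∑ ω, if E ω then μ ω else 0

noncomputable def cPr {Ω : Type*} [Fintype Ω] (μ : Ω → ℝ) (E F : Ω → Prop) : ℝ :=
  Pr μ (fun ω => E ω ∧ F ω) / Pr μ F

/-
Since `x ⊥ (w, o) | (a, z, u)`, conditioning additionally on `x = xv` does not change
`P(w, z_next, o | a, z, u)`, so the law of total probability over `u`, taken inside the event
`{a, z, x = xv}`, is exactly the product of the two matrices. Restricting the columns to `J` keeps
this factorization, and cancelling the invertible block `P_J(U | a, z, X)` gives the second identity.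
-/

section Probability

variable {Ω : Type*} [Fintype Ω] (μ : Ω → ℝ)

lemma Pr_nonneg (hμ : ∀ ω, 0 ≤ μ ω) (E : Ω → Prop) : 0 ≤ Pr μ E :=
  Finset.sum_nonneg fun ω _ => ite_nonneg (hμ ω) le_rfl

lemma Pr_mono (hμ : ∀ ω, 0 ≤ μ ω) {E F : Ω → Prop} (h : ∀ ω, E ω → F ω) :
    Pr μ E ≤ Pr μ F :=
  Finset.sum_le_sum fun ω _ => by
    by_cases hE : E ω
    · simp [hE, h ω hE]
    · rw [if_neg hE]
      exact ite_nonneg (hμ ω) le_rfl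

lemma Pr_congr {E F : Ω → Prop} (h : ∀ ω, E ω ↔ F ω) : Pr μ E = Pr μ F :=
  congrArg (Pr μ) (funext fun ω => propext (h ω))

lemma Pr_eq_sum_Pr_and {β : Type*} [Fintype β] (f : Ω → β) (E : Ω → Prop) :
    Pr μ E = ∑ v, Pr μ (fun ω => f ω = v ∧ E ω) := by
  unfold Pr
  rw [Finset.sum_comm]
  refine Finset.sum_congr rfl fun ω _ => ?_
  by_cases hE : E ω <;> simp [hE]

lemma cPr_mul_Pr (hμ : ∀ ω, 0 ≤ μ ω) (E F : Ω → Prop) :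
    cPr μ E F * Pr μ F = Pr μ (fun ω => E ω ∧ F ω) := by
  rcases (Pr_nonneg μ hμ F).eq_or_lt with hF | hF
  · have hEF : Pr μ (fun ω => E ω ∧ F ω) = 0 :=
      le_antisymm (hF ▸ Pr_mono μ hμ fun _ h => h.2) (Pr_nonneg μ hμ _)
    rw [← hF, hEF, mul_zero]
  · exact div_mul_cancel₀ _ hF.ne'

theorem cPr_eq_sum_cPr_mul_cPr_of_condIndep (hμ : ∀ ω, 0 ≤ μ ω) {β : Type*} [Fintype β]
    (f : Ω → β) (A C H : Ω → Prop)
    (hind : ∀ v, cPr μ A (fun ω => C ω ∧ f ω = v ∧ H ω) = cPr μ A (fun ω => C ω ∧ f ω = v)) :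
    ∑ v, cPr μ A (fun ω => C ω ∧ f ω = v) * cPr μ (fun ω => f ω = v) (fun ω => C ω ∧ H ω) =
      cPr μ A (fun ω => C ω ∧ H ω) := by
  have hterm : ∀ v,
      cPr μ A (fun ω => C ω ∧ f ω = v) * cPr μ (fun ω => f ω = v) (fun ω => C ω ∧ H ω) =
        Pr μ (fun ω => f ω = v ∧ A ω ∧ C ω ∧ H ω) / Pr μ (fun ω => C ω ∧ H ω) := by
    intro v
    show _ * (Pr μ _ / _) = _
    have hswap : Pr μ (fun ω => f ω = v ∧ C ω ∧ H ω) = Pr μ (fun ω => C ω ∧ f ω = v ∧ H ω) :=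
      Pr_congr μ fun _ => and_left_comm
    rw [← mul_div_assoc, hswap, ← hind v, cPr_mul_Pr μ hμ]
    exact congrArg (· / _) (Pr_congr μ fun _ => by tauto)
  rw [Finset.sum_congr rfl fun v _ => hterm v, ← Finset.sum_div, ← Pr_eq_sum_Pr_and]
  rfl

theorem of_cPr_mul_of_cPr_of_condIndep (hμ : ∀ ω, 0 ≤ μ ω) {ι κ β : Type*} [Fintype β]
    (f : Ω → β) (A : ι → Ω → Prop) (C : Ω → Prop) (H : κ → Ω → Prop)
    (hind : ∀ i v k, cPr μ (A i) (fun ω => C ω ∧ f ω = v ∧ H k ω) =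
      cPr μ (A i) (fun ω => C ω ∧ f ω = v)) :
    (of fun i v => cPr μ (A i) (fun ω => C ω ∧ f ω = v)) *
        (of fun v k => cPr μ (fun ω => f ω = v) (fun ω => C ω ∧ H k ω)) =
      of fun i k => cPr μ (A i) (fun ω => C ω ∧ H k ω) := by
  ext i k
  exact cPr_eq_sum_cPr_mul_cPr_of_condIndep μ hμ f (A i) C (H k) fun v => hind i v k

end Probability

theorem Matrix.eq_submatrix_mul_inv_submatrix_of_mul_eq {m n l α : Type*} [Fintype n]
    [DecidableEq n] [CommRing α] {M : Matrix m n α} {N : Matrix n l α} {R : Matrix m l α}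
    (h : M * N = R) (J : n → l) (hJ : IsUnit (N.submatrix id J).det) :
    M = R.submatrix id J * (N.submatrix id J)⁻¹ := by
  rw [← h, submatrix_mul M N id id J Function.bijective_id, submatrix_id_id,
    mul_nonsing_inv_cancel_right _ _ hJ]

theorem decoupled_factorization_general
    {Ω : Type*} [Fintype Ω] (μ : Ω → ℝ)
    {Uty Xty Wty Oty Zty Aty : Type*}
    [Fintype Uty] [DecidableEq Uty]
    (u : Ω → Uty) (x : Ω → Xty) (w : Ω → Wty) (o : Ω → Oty)
    (z znext : Ω → Zty) (a : Ω → Aty)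
    (hμ : ∀ ω, 0 ≤ μ ω)
    (av : Aty) (zv znv : Zty) (ov : Oty)
    -- x ⊥ (w, o) | (a, z, u): P(w, z_next, o | a, z, u, x) = P(w, z_next, o | a, z, u)
    (hCI : ∀ (wv : Wty) (zn : Zty) (ov' : Oty) (uv : Uty) (xv : Xty),
      cPr μ (fun ω => w ω = wv ∧ znext ω = zn ∧ o ω = ov')
          (fun ω => a ω = av ∧ z ω = zv ∧ u ω = uv ∧ x ω = xv) =
        cPr μ (fun ω => w ω = wv ∧ znext ω = zn ∧ o ω = ov')
          (fun ω => a ω = av ∧ z ω = zv ∧ u ω = uv)) :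
    ((Matrix.of fun (wv : Wty) (uv : Uty) =>
        cPr μ (fun ω => w ω = wv ∧ znext ω = znv ∧ o ω = ov)
          (fun ω => a ω = av ∧ z ω = zv ∧ u ω = uv)) *
      (Matrix.of fun (uv : Uty) (xv : Xty) =>
        cPr μ (fun ω => u ω = uv) (fun ω => a ω = av ∧ z ω = zv ∧ x ω = xv)) =
      Matrix.of fun (wv : Wty) (xv : Xty) =>
        cPr μ (fun ω => w ω = wv ∧ znext ω = znv ∧ o ω = ov)
          (fun ω => a ω = av ∧ z ω = zv ∧ x ω = xv)) ∧
    (∀ J : Uty ↪ Xty,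
      IsUnit (Matrix.of fun (uv j : Uty) =>
        cPr μ (fun ω => u ω = uv) (fun ω => a ω = av ∧ z ω = zv ∧ x ω = J j)).det →
      (Matrix.of fun (wv : Wty) (uv : Uty) =>
        cPr μ (fun ω => w ω = wv ∧ znext ω = znv ∧ o ω = ov)
          (fun ω => a ω = av ∧ z ω = zv ∧ u ω = uv)) =
      (Matrix.of fun (wv : Wty) (j : Uty) =>
        cPr μ (fun ω => w ω = wv ∧ znext ω = znv ∧ o ω = ov)
          (fun ω => a ω = av ∧ z ω = zv ∧ x ω = J j)) *
      (Matrix.of fun (uv j : Uty) =>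
        cPr μ (fun ω => u ω = uv) (fun ω => a ω = av ∧ z ω = zv ∧ x ω = J j))⁻¹) := by
  have hfactor := of_cPr_mul_of_cPr_of_condIndep μ hμ u
    (fun wv ω => w ω = wv ∧ znext ω = znv ∧ o ω = ov) (fun ω => a ω = av ∧ z ω = zv)
    (fun xv ω => x ω = xv) fun wv uv xv => by simpa only [and_assoc] using hCI wv znv ov uv xv
  simp only [and_assoc] at hfactor
  exact ⟨hfactor, fun J hJ => Matrix.eq_submatrix_mul_inv_submatrix_of_mul_eq hfactor J hJ⟩

/-- Decoupled-POMDP factorization, first part of Lemma 6: if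
`x ⊥ (w, o) | (a, z, u)` then
`P(W, z_next, o | a, z, U) * P(U | a, z, X) = P(W, z_next, o | a, z, X)`,
and if the column restriction of `P(U | a, z, X)` to an index set `J` of size `|U|`
(given as an embedding `J : U ↪ X`) is invertible, then
`P(W, z_next, o | a, z, U) = P_J(W, z_next, o | a, z, X) * P_J(U | a, z, X)⁻¹`. -/
theorem decoupled_factorization
    {Ω : Type*} [Fintype Ω] (μ : Ω → ℝ)
    {Uty Xty Wty Oty Zty Aty : Type*}
    [Fintype Uty] [Fintype Xty] [Fintype Wty] [DecidableEq Uty]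
    (u : Ω → Uty) (x : Ω → Xty) (w : Ω → Wty) (o : Ω → Oty)
    (z znext : Ω → Zty) (a : Ω → Aty)
    (hμ : ∀ ω, 0 ≤ μ ω) (hsum : ∑ ω, μ ω = 1)
    (av : Aty) (zv znv : Zty) (ov : Oty)
    -- positivity of the conditioning events
    (hposu : ∀ uv, 0 < Pr μ (fun ω => a ω = av ∧ z ω = zv ∧ u ω = uv))
    (hposx : ∀ xv, 0 < Pr μ (fun ω => a ω = av ∧ z ω = zv ∧ x ω = xv))
    -- x ⊥ (w, o) | (a, z, u): P(w, z_next, o | a, z, u, x) = P(w, z_next, o | a, z, u)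
    (hCI : ∀ (wv : Wty) (zn : Zty) (ov' : Oty) (uv : Uty) (xv : Xty),
      cPr μ (fun ω => w ω = wv ∧ znext ω = zn ∧ o ω = ov')
          (fun ω => a ω = av ∧ z ω = zv ∧ u ω = uv ∧ x ω = xv) =
        cPr μ (fun ω => w ω = wv ∧ znext ω = zn ∧ o ω = ov')
          (fun ω => a ω = av ∧ z ω = zv ∧ u ω = uv)) :
    ((Matrix.of fun (wv : Wty) (uv : Uty) =>
        cPr μ (fun ω => w ω = wv ∧ znext ω = znv ∧ o ω = ov)
          (fun ω => a ω = av ∧ z ω = zv ∧ u ω = uv)) *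
      (Matrix.of fun (uv : Uty) (xv : Xty) =>
        cPr μ (fun ω => u ω = uv) (fun ω => a ω = av ∧ z ω = zv ∧ x ω = xv)) =
      Matrix.of fun (wv : Wty) (xv : Xty) =>
        cPr μ (fun ω => w ω = wv ∧ znext ω = znv ∧ o ω = ov)
          (fun ω => a ω = av ∧ z ω = zv ∧ x ω = xv)) ∧
    (∀ J : Uty ↪ Xty,
      IsUnit (Matrix.of fun (uv j : Uty) =>
        cPr μ (fun ω => u ω = uv) (fun ω => a ω = av ∧ z ω = zv ∧ x ω = J j)).det →
      (Matrix.of fun (wv : Wty) (uv : Uty) =>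
        cPr μ (fun ω => w ω = wv ∧ znext ω = znv ∧ o ω = ov)
          (fun ω => a ω = av ∧ z ω = zv ∧ u ω = uv)) =
      (Matrix.of fun (wv : Wty) (j : Uty) =>
        cPr μ (fun ω => w ω = wv ∧ znext ω = znv ∧ o ω = ov)
          (fun ω => a ω = av ∧ z ω = zv ∧ x ω = J j)) *
      (Matrix.of fun (uv j : Uty) =>
        cPr μ (fun ω => u ω = uv) (fun ω => a ω = av ∧ z ω = zv ∧ x ω = J j))⁻¹) :=
  decoupled_factorization_general μ u x w o z znext a hμ av zv znv ov hCI
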